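/- Let 𝓛 : (ℝⁿ)^{N+1} → ℝ be a smooth time-independent N-th order Lagrangian and q : ℝ → ℝⁿ a smooth solution of the Euler–Lagrange equation ∑_{k=0}^{N} (−1)^k (d/dt)^k ∂_{q^{(k)}} 𝓛 = 0. Then t ↦ ∑_{i=1}^N ∑_{k=0}^{i−1} (−1)^k (d/dt)^k[∂_{q^{(i)}} 𝓛(q,…,q⁽ᴺ⁾)] · q^{(i−k)}(t) − 𝓛(q(t),…,q⁽ᴺ⁾(t)) is constant (the higher-order energy first integral). -/

import Mathlib

/-!
Differentiating the energy, the Lagrangian contributes `∑ᵢ ⟪∂_{q⁽ⁱ⁾}𝓛, q⁽ⁱ⁺¹⁾⟫` by the chain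
rule, while the inner sum for `q⁽ⁱ⁾` telescopes to
`⟪∂_{q⁽ⁱ⁾}𝓛, q⁽ⁱ⁺¹⁾⟫ - (-1)ⁱ ⟪(d/dt)ⁱ ∂_{q⁽ⁱ⁾}𝓛, q̇⟫`. So the time derivative of the energy is
minus the Euler–Lagrange expression paired with `q̇`, which vanishes along solutions.
-/

open scoped RealInnerProductSpace

/-- The gradient of a time-independent `N`-th order Lagrangian `𝓛(q, …, q⁽ᴺ⁾)`
with respect to its block argument `q⁽ⁱ⁾`, evaluated along the motion `q` at time `t`. -/
noncomputable def pgradAut {n N : ℕ}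
    (𝓛 : (Fin (N + 1) → EuclideanSpace ℝ (Fin n)) → ℝ)
    (q : ℝ → EuclideanSpace ℝ (Fin n)) (i : Fin (N + 1)) (t : ℝ) :
    EuclideanSpace ℝ (Fin n) :=
  gradient
    (fun y => 𝓛 (Function.update (fun j : Fin (N + 1) => iteratedDeriv (j : ℕ) q t) i y))
    (iteratedDeriv (i : ℕ) q t)

open Finset
open scoped ContDiff

section IteratedDeriv

variable {𝕜 E : Type*} [NontriviallyNormedField 𝕜] [NormedAddCommGroup E] [NormedSpace 𝕜 E]
  {f : 𝕜 → E}

theorem ContDiff.contDiff_iteratedDeriv (hf : ContDiff 𝕜 ∞ f) (k : ℕ) :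
    ContDiff 𝕜 ∞ (iteratedDeriv k f) := by
  simpa [iteratedDeriv_eq_iterate] using hf.iterate_deriv k

theorem ContDiff.hasDerivAt_iteratedDeriv (hf : ContDiff 𝕜 ∞ f) (k : ℕ) (t : 𝕜) :
    HasDerivAt (iteratedDeriv k f) (iteratedDeriv (k + 1) f t) t := by
  rw [iteratedDeriv_succ]
  exact (hf.differentiable_iteratedDeriv k
    (WithTop.coe_lt_coe.2 (ENat.natCast_lt_top k))).differentiableAt.hasDerivAt

theorem ContDiff.contDiff_jet (hf : ContDiff 𝕜 ∞ f) (N : ℕ) :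
    ContDiff 𝕜 ∞ (fun t => fun j : Fin (N + 1) => iteratedDeriv (j : ℕ) f t) :=
  contDiff_pi.2 fun j => hf.contDiff_iteratedDeriv j

end IteratedDeriv

section Telescoping

variable {F : Type*} [NormedAddCommGroup F] [InnerProductSpace ℝ F] {p x : ℝ → F}

theorem hasDerivAt_sum_range_neg_one_pow_inner_iteratedDeriv (hp : ContDiff ℝ ∞ p)
    (hx : ContDiff ℝ ∞ x) (m : ℕ) (t : ℝ) :
    HasDerivAt
      (fun t => ∑ k ∈ range m, (-1 : ℝ) ^ k * ⟪iteratedDeriv k p t, iteratedDeriv (m - k) x t⟫)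
      (⟪p t, iteratedDeriv (m + 1) x t⟫ - (-1 : ℝ) ^ m * ⟪iteratedDeriv m p t, iteratedDeriv 1 x t⟫)
      t := by
  set g : ℕ → ℝ := fun k => (-1 : ℝ) ^ k * ⟪iteratedDeriv k p t, iteratedDeriv (m + 1 - k) x t⟫
  have hterm : ∀ k ∈ range m, HasDerivAt
      (fun t => (-1 : ℝ) ^ k * ⟪iteratedDeriv k p t, iteratedDeriv (m - k) x t⟫)
      (g k - g (k + 1)) t := by
    intro k hk
    have hkm : k < m := mem_range.1 hk
    refine (((hp.hasDerivAt_iteratedDeriv k t).inner ℝ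
      (hx.hasDerivAt_iteratedDeriv (m - k) t)).const_mul ((-1 : ℝ) ^ k)).congr_deriv ?_
    rw [show m - k + 1 = m + 1 - k by omega]
    simp only [g, show m + 1 - (k + 1) = m - k by omega, pow_succ]
    ring
  have := HasDerivAt.fun_sum hterm
  rw [sum_range_sub'] at this
  simpa [g, show m + 1 - m = 1 by omega] using this

end Telescoping

section Lagrangian

variable {n N : ℕ} {𝓛 : (Fin (N + 1) → EuclideanSpace ℝ (Fin n)) → ℝ}
  {q : ℝ → EuclideanSpace ℝ (Fin n)}

theorem pgradAut_eq_toDual_symm {t : ℝ}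
    (h𝓛 : DifferentiableAt ℝ 𝓛 (fun j : Fin (N + 1) => iteratedDeriv (j : ℕ) q t))
    (i : Fin (N + 1)) :
    pgradAut 𝓛 q i t =
      (InnerProductSpace.toDual ℝ (EuclideanSpace ℝ (Fin n))).symm
        ((fderiv ℝ 𝓛 (fun j : Fin (N + 1) => iteratedDeriv (j : ℕ) q t)).comp
          (.pi (Pi.single i (.id ℝ _)))) := by
  set x : Fin (N + 1) → EuclideanSpace ℝ (Fin n) := fun j => iteratedDeriv (j : ℕ) q t
  have h𝓛' : HasFDerivAt 𝓛 (fderiv ℝ 𝓛 x) (Function.update x i (x i)) := by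
    rw [Function.update_eq_self]
    exact h𝓛.hasFDerivAt
  exact congrArg _ (h𝓛'.comp (x i) (hasFDerivAt_update x (x i))).fderiv

theorem inner_pgradAut {t : ℝ}
    (h𝓛 : DifferentiableAt ℝ 𝓛 (fun j : Fin (N + 1) => iteratedDeriv (j : ℕ) q t))
    (i : Fin (N + 1)) (v : EuclideanSpace ℝ (Fin n)) :
    ⟪pgradAut 𝓛 q i t, v⟫ =
      fderiv ℝ 𝓛 (fun j : Fin (N + 1) => iteratedDeriv (j : ℕ) q t) (Pi.single i v) := by
  rw [pgradAut_eq_toDual_symm h𝓛, InnerProductSpace.toDual_symm_apply,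
    ContinuousLinearMap.comp_apply]
  congr 1
  funext j
  rcases eq_or_ne j i with rfl | h
  · simp
  · simp [h]

theorem contDiff_pgradAut (h𝓛 : ContDiff ℝ ∞ 𝓛) (hq : ContDiff ℝ ∞ q) (i : Fin (N + 1)) :
    ContDiff ℝ ∞ (pgradAut 𝓛 q i) := by
  have hdiff : Differentiable ℝ 𝓛 := h𝓛.differentiable (by simp)
  rw [show pgradAut 𝓛 q i = _ from funext fun t => pgradAut_eq_toDual_symm (hdiff _) i]
  exact (InnerProductSpace.toDual ℝ _).symm.contDiff.comp
    (((h𝓛.fderiv_right le_rfl).comp (hq.contDiff_jet N)).clm_comp contDiff_const)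

theorem hasDerivAt_comp_jet (h𝓛 : Differentiable ℝ 𝓛) (hq : ContDiff ℝ ∞ q) (t : ℝ) :
    HasDerivAt (fun t => 𝓛 (fun j : Fin (N + 1) => iteratedDeriv (j : ℕ) q t))
      (∑ i : Fin (N + 1), ⟪pgradAut 𝓛 q i t, iteratedDeriv ((i : ℕ) + 1) q t⟫) t := by
  have hjet : HasDerivAt (fun t => fun j : Fin (N + 1) => iteratedDeriv (j : ℕ) q t)
      (∑ i : Fin (N + 1), Pi.single i (iteratedDeriv ((i : ℕ) + 1) q t)) t := by
    rw [univ_sum_single]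
    exact hasDerivAt_pi.2 fun j => hq.hasDerivAt_iteratedDeriv j t
  refine ((h𝓛 _).hasFDerivAt.comp_hasDerivAt t hjet).congr_deriv ?_
  simp only [map_sum, inner_pgradAut (h𝓛 _)]

noncomputable def higherOrderEnergy (𝓛 : (Fin (N + 1) → EuclideanSpace ℝ (Fin n)) → ℝ)
    (q : ℝ → EuclideanSpace ℝ (Fin n)) (t : ℝ) : ℝ :=
  (∑ i : Fin (N + 1), ∑ k ∈ range (i : ℕ),
    (-1 : ℝ) ^ k * ⟪iteratedDeriv k (pgradAut 𝓛 q i) t, iteratedDeriv ((i : ℕ) - k) q t⟫)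
  - 𝓛 (fun i : Fin (N + 1) => iteratedDeriv (i : ℕ) q t)

theorem hasDerivAt_higherOrderEnergy (h𝓛 : ContDiff ℝ ∞ 𝓛) (hq : ContDiff ℝ ∞ q) (t : ℝ) :
    HasDerivAt (higherOrderEnergy 𝓛 q)
      (-⟪∑ k : Fin (N + 1), ((-1 : ℝ) ^ (k : ℕ)) • iteratedDeriv (k : ℕ) (pgradAut 𝓛 q k) t,
        iteratedDeriv 1 q t⟫) t := by
  have hsum := HasDerivAt.fun_sum (u := univ) fun i _ =>
    hasDerivAt_sum_range_neg_one_pow_inner_iteratedDeriv (contDiff_pgradAut h𝓛 hq i) hq i t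
  refine (hsum.sub (hasDerivAt_comp_jet (h𝓛.differentiable (by simp)) hq t)).congr_deriv ?_
  simp only [sum_inner, real_inner_smul_left, sum_sub_distrib]
  ring

end Lagrangian

/-- Higher-order energy first integral: for a smooth time-independent `N`-th
order Lagrangian, `∑_{i=1}^N ∑_{k=0}^{i−1} (−1)^k (d/dt)^k[∂_{q⁽ⁱ⁾}𝓛] · q⁽ⁱ⁻ᵏ⁾ − 𝓛`
is constant along solutions of the Euler–Lagrange equation. -/
theorem stmt_10 {n N : ℕ}
    (𝓛 : (Fin (N + 1) → EuclideanSpace ℝ (Fin n)) → ℝ)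
    (h𝓛 : ContDiff ℝ (⊤ : ℕ∞) 𝓛)
    (q : ℝ → EuclideanSpace ℝ (Fin n)) (hq : ContDiff ℝ (⊤ : ℕ∞) q)
    (hEL : ∀ t : ℝ,
      ∑ k : Fin (N + 1), ((-1 : ℝ) ^ (k : ℕ)) • iteratedDeriv (k : ℕ) (pgradAut 𝓛 q k) t = 0) :
    ∃ c : ℝ, ∀ t : ℝ,
      (∑ i : Fin (N + 1), ∑ k ∈ Finset.range (i : ℕ),
        (-1 : ℝ) ^ k *
          ⟪iteratedDeriv k (pgradAut 𝓛 q i) t, iteratedDeriv ((i : ℕ) - k) q t⟫)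
      - 𝓛 (fun i : Fin (N + 1) => iteratedDeriv (i : ℕ) q t)
      = c := by
  have hE : ∀ t, HasDerivAt (higherOrderEnergy 𝓛 q) 0 t := fun t => by
    simpa [hEL t] using hasDerivAt_higherOrderEnergy h𝓛 hq t
  exact ⟨higherOrderEnergy 𝓛 q 0, fun t =>
    is_const_of_deriv_eq_zero (fun s => (hE s).differentiableAt) (fun s => (hE s).deriv) t 0⟩
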